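/- Let G be a short dicotic game. If every follower G' of G (including G itself) satisfies o(G' + (−G')) = N under misère play, then G + (−G) = 0 (mod D⁻); in particular G is invertible with inverse −G. -/

import Mathlib

universe u

namespace SetTheory

/-- Conway pre-games, as formerly in Mathlib (`SetTheory.PGame`, removed since). -/
inductive PGame : Type (u + 1)
  | mk : ∀ α β : Type u, (α → PGame) → (β → PGame) → PGame

namespace PGame

def LeftMoves : PGame → Type u
  | mk l _ _ _ => l

def RightMoves : PGame → Type u
  | mk _ r _ _ => r

def moveLeft : ∀ g : PGame, LeftMoves g → PGame
  | mk _l _ L _ => L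

def moveRight : ∀ g : PGame, RightMoves g → PGame
  | mk _ _r _ R => R

inductive IsOption : PGame → PGame → Prop
  | moveLeft {x : PGame} (i : x.LeftMoves) : IsOption (x.moveLeft i) x
  | moveRight {x : PGame} (i : x.RightMoves) : IsOption (x.moveRight i) x

instance : Zero PGame :=
  ⟨⟨PEmpty, PEmpty, PEmpty.elim, PEmpty.elim⟩⟩

def star : PGame.{u} :=
  ⟨PUnit, PUnit, fun _ => 0, fun _ => 0⟩

def neg : PGame → PGame
  | ⟨l, r, L, R⟩ => ⟨r, l, fun i => neg (R i), fun i => neg (L i)⟩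

instance : Neg PGame :=
  ⟨neg⟩

noncomputable instance : Add PGame.{u} :=
  ⟨fun x y => by
    induction x generalizing y with | mk xl xr _ _ IHxl IHxr => _
    induction y with | mk yl yr yL yR IHyl IHyr => _
    have y := mk yl yr yL yR
    refine ⟨xl ⊕ yl, xr ⊕ yr, Sum.rec ?_ ?_, Sum.rec ?_ ?_⟩
    · exact fun i => IHxl i y
    · exact IHyl
    · exact fun i => IHxr i y
    · exact IHyr⟩

def Identical : PGame.{u} → PGame.{u} → Prop
  | mk _ _ xL xR, mk _ _ yL yR =>
    Relator.BiTotal (fun i j ↦ Identical (xL i) (yL j)) ∧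
    Relator.BiTotal (fun i j ↦ Identical (xR i) (yR j))

noncomputable def birthday : PGame.{u} → Ordinal.{u}
  | ⟨_, _, xL, xR⟩ =>
    max (Ordinal.lsub.{u, u} fun i => birthday (xL i)) (Ordinal.lsub.{u, u} fun i => birthday (xR i))

theorem birthday_moveLeft_lt {x : PGame} (i : x.LeftMoves) :
    (x.moveLeft i).birthday < x.birthday := by
  cases x; rw [birthday]; exact lt_max_of_lt_left (Ordinal.lt_lsub _ i)

theorem birthday_moveRight_lt {x : PGame} (i : x.RightMoves) :
    (x.moveRight i).birthday < x.birthday := by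
  cases x; rw [birthday]; exact lt_max_of_lt_right (Ordinal.lt_lsub _ i)

end PGame

end SetTheory

open SetTheory PGame

namespace MisereDicot

def Follower (G' G : PGame) : Prop := Relation.ReflTransGen PGame.IsOption G' G

def IsShort (G : PGame) : Prop :=
  ∀ G', Follower G' G → Finite G'.LeftMoves ∧ Finite G'.RightMoves

def Dicot (G : PGame) : Prop :=
  ∀ G', Follower G' G → (IsEmpty G'.LeftMoves ↔ IsEmpty G'.RightMoves)

mutual
def LeftWinsFirst (G : PGame) : Prop :=
  IsEmpty G.LeftMoves ∨ ∃ i, ¬ RightWinsFirst (G.moveLeft i)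
termination_by G.birthday
decreasing_by exact PGame.birthday_moveLeft_lt i

def RightWinsFirst (G : PGame) : Prop :=
  IsEmpty G.RightMoves ∨ ∃ j, ¬ LeftWinsFirst (G.moveRight j)
termination_by G.birthday
decreasing_by exact PGame.birthday_moveRight_lt j
end

inductive MOutcome : Type
  | L | N | P | R
deriving DecidableEq

instance : LE MOutcome := ⟨fun a b => a = b ∨ a = .R ∨ b = .L⟩

noncomputable def outcome (G : PGame) : MOutcome := by
  classical
  exact if LeftWinsFirst G then (if RightWinsFirst G then .N else .L)
        else (if RightWinsFirst G then .R else .P)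

def Dge (G H : PGame) : Prop :=
  ∀ X : PGame, IsShort X → Dicot X → outcome (H + X) ≤ outcome (G + X)

def Deq (G H : PGame) : Prop :=
  ∀ X : PGame, IsShort X → Dicot X → outcome (G + X) = outcome (H + X)

def Dgt (G H : PGame) : Prop := Dge G H ∧ ¬ Deq G H

def DInvertible (G : PGame) : Prop :=
  ∃ H : PGame, IsShort H ∧ Dicot H ∧ Deq (G + H) 0

/-- The left option `G^L_i` is reversible through its right option `(G^L_i)^R_j ≼ G`. -/
def LeftReversibleAt (G : PGame) (i : G.LeftMoves) (j : (G.moveLeft i).RightMoves) : Prop :=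
  Dge G ((G.moveLeft i).moveRight j)

def RightReversibleAt (G : PGame) (j : G.RightMoves) (i : (G.moveRight j).LeftMoves) : Prop :=
  Dge ((G.moveRight j).moveLeft i) G

/-- `G` has a dominated left option (removable by the Domination theorem). -/
def LeftDominated (G : PGame) : Prop :=
  ∃ i i' : G.LeftMoves, ¬ (G.moveLeft i).Identical (G.moveLeft i') ∧
    Dge (G.moveLeft i') (G.moveLeft i)

def RightDominated (G : PGame) : Prop :=
  ∃ j j' : G.RightMoves, ¬ (G.moveRight j).Identical (G.moveRight j') ∧
    Dge (G.moveRight j) (G.moveRight j')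

/-- `G` has a non-atomic reversible left option (bypassable). -/
def LeftNonAtomicReversible (G : PGame) : Prop :=
  ∃ i j, LeftReversibleAt G i j ∧ Nonempty ((G.moveLeft i).moveRight j).LeftMoves

def RightNonAtomicReversible (G : PGame) : Prop :=
  ∃ j i, RightReversibleAt G j i ∧ Nonempty ((G.moveRight j).moveLeft i).RightMoves

/-- `G` has an atomic-reversible left option to which the atomic-reversibility
replacement applies nontrivially (i.e. changing the set of options): either some
other left option is a winning first move for Left (so the option is removable),
or the option is not already `*`. -/
def LeftAtomicReducible (G : PGame) : Prop :=
  ∃ i j, LeftReversibleAt G i j ∧ IsEmpty ((G.moveLeft i).moveRight j).LeftMoves ∧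
    ((∃ i', ¬ (G.moveLeft i').Identical (G.moveLeft i) ∧ ¬ RightWinsFirst (G.moveLeft i')) ∨
      ¬ (G.moveLeft i).Identical star)

def RightAtomicReducible (G : PGame) : Prop :=
  ∃ j i, RightReversibleAt G j i ∧ IsEmpty ((G.moveRight j).moveLeft i).RightMoves ∧
    ((∃ j', ¬ (G.moveRight j').Identical (G.moveRight j) ∧ ¬ LeftWinsFirst (G.moveRight j')) ∨
      ¬ (G.moveRight j).Identical star)

/-- The Substitution theorem applies to `G`: `G = {A | C}` with `A` an
atomic-reversible left option and `C` an atomic-reversible right option. -/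
def SubstitutionReducible (G : PGame) : Prop :=
  (∀ i i' : G.LeftMoves, (G.moveLeft i).Identical (G.moveLeft i')) ∧
  (∀ j j' : G.RightMoves, (G.moveRight j).Identical (G.moveRight j')) ∧
  (∃ i j, LeftReversibleAt G i j ∧ IsEmpty ((G.moveLeft i).moveRight j).LeftMoves) ∧
  (∃ j i, RightReversibleAt G j i ∧ IsEmpty ((G.moveRight j).moveLeft i).RightMoves)

/-- `G` is in canonical form: no follower admits any of the misère-dicot
simplifications (domination, non-atomic reversibility, atomic reversibility,
substitution) producing an equivalent game with a different set of options. -/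
def CanonicalForm (G : PGame) : Prop :=
  ∀ G', Follower G' G →
    ¬ (LeftDominated G' ∨ RightDominated G' ∨
       LeftNonAtomicReversible G' ∨ RightNonAtomicReversible G' ∨
       LeftAtomicReducible G' ∨ RightAtomicReducible G' ∨
       SubstitutionReducible G')

/-- The game `*2 = {0, * | 0, *}`. -/
def star2 : PGame :=
  PGame.mk Bool Bool (fun b => cond b star 0) (fun b => cond b star 0)

open Classical in
/-- The adjoint `G°` of `G`. -/
noncomputable def adjoint : PGame → PGame
  | PGame.mk l r L R =>
    if IsEmpty l ∧ IsEmpty r then star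
    else if IsEmpty l then PGame.mk r PUnit (fun j => adjoint (R j)) (fun _ => 0)
    else if IsEmpty r then PGame.mk PUnit l (fun _ => 0) (fun i => adjoint (L i))
    else PGame.mk r l (fun j => adjoint (R j)) (fun i => adjoint (L i))

/-- A universe of short games: a class closed under taking options, disjunctive
sums and conjugates. -/
structure GameUniverse where
  mem : PGame → Prop
  short_mem : ∀ G, mem G → IsShort G
  isOption_mem : ∀ G G', mem G → PGame.IsOption G' G → mem G'
  add_mem : ∀ G H, mem G → mem H → mem (G + H)
  neg_mem : ∀ G, mem G → mem (-G)

/-- `G ≽ H` modulo the universe `U`. -/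
def UGe (U : GameUniverse) (G H : PGame) : Prop :=
  ∀ X : PGame, U.mem X → outcome (H + X) ≤ outcome (G + X)

/-- `G = H` modulo the universe `U`. -/
def UEq (U : GameUniverse) (G H : PGame) : Prop :=
  ∀ X : PGame, U.mem X → outcome (G + X) = outcome (H + X)

/-- `G ≻ H` modulo the universe `U`. -/
def UGt (U : GameUniverse) (G H : PGame) : Prop := UGe U G H ∧ ¬ UEq U G H

/-- `J` is invertible in the universe `U`. -/
def UInvertible (U : GameUniverse) (J : PGame) : Prop :=
  ∃ J' : PGame, U.mem J' ∧ UEq U (J + J') 0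

end MisereDicot

/-! Mirror strategy. For a follower `H` of `G` and a dicot `X`, whoever wins `X` moving first
also wins `H + -H + X` moving first: a winning move in `X` stays winning, while against a
player who loses `X` every move in `H + -H` is answered by its mirror image, reaching
`H' + -H' + X` for an option `H'` of `H`. Once `X` is exhausted it has no moves at all (it is a
dicot), and `H + -H` is won by the player to move because `o(H + -H) = N`. Induction on `H` and
`X` then gives `o(G + -G + X) = o(X)`. -/

namespace SetTheory.PGame

variable {x y : PGame.{u}}

@[elab_as_elim]
theorem moveInduction {P : PGame → Prop}
    (h : ∀ x, (∀ i, P (x.moveLeft i)) → (∀ j, P (x.moveRight j)) → P x) (x : PGame) : P x := by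
  induction x with
  | mk _ _ _ _ ihl ihr => exact h _ ihl ihr

theorem isEmpty_leftMoves_add :
    IsEmpty (x + y).LeftMoves ↔ IsEmpty x.LeftMoves ∧ IsEmpty y.LeftMoves := by
  cases x; cases y; exact isEmpty_sum

theorem isEmpty_rightMoves_add :
    IsEmpty (x + y).RightMoves ↔ IsEmpty x.RightMoves ∧ IsEmpty y.RightMoves := by
  cases x; cases y; exact isEmpty_sum

theorem exists_leftMoves_add {p : PGame → Prop} :
    (∃ k, p ((x + y).moveLeft k)) ↔ (∃ i, p (x.moveLeft i + y)) ∨ ∃ i, p (x + y.moveLeft i) := by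
  cases x; cases y; exact Sum.exists

theorem exists_rightMoves_add {p : PGame → Prop} :
    (∃ k, p ((x + y).moveRight k)) ↔ (∃ j, p (x.moveRight j + y)) ∨ ∃ j, p (x + y.moveRight j) := by
  cases x; cases y; exact Sum.exists

instance : IsEmpty (0 : PGame.{u}).LeftMoves := inferInstanceAs (IsEmpty PEmpty)

instance : IsEmpty (0 : PGame.{u}).RightMoves := inferInstanceAs (IsEmpty PEmpty)

protected theorem neg_neg (x : PGame) : - -x = x := by
  induction x with
  | mk l r L R ihl ihr =>
    show mk l r (fun i => - -L i) (fun j => - -R j) = _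
    simp only [ihl, ihr]

theorem IsOption.neg (h : IsOption x y) : IsOption (-x) (-y) := by
  cases h with
  | moveLeft i => cases y with | mk l r L R => exact .moveRight (x := -mk l r L R) i
  | moveRight j => cases y with | mk l r L R => exact .moveLeft (x := -mk l r L R) j

end SetTheory.PGame

namespace MisereDicot

theorem outcome_eq_N_iff {G : PGame} :
    outcome G = .N ↔ LeftWinsFirst G ∧ RightWinsFirst G := by
  unfold outcome
  split_ifs <;> simp_all

theorem outcome_eq_of_winsFirst_iff {G H : PGame} (hL : LeftWinsFirst G ↔ LeftWinsFirst H)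
    (hR : RightWinsFirst G ↔ RightWinsFirst H) : outcome G = outcome H := by
  unfold outcome
  split_ifs <;> tauto

theorem Follower.neg {G H : PGame} (h : Follower G H) : Follower (-G) (-H) :=
  Relation.ReflTransGen.lift Neg.neg (fun _ _ => IsOption.neg) _ _ h

theorem Follower.neg_of_neg {G H : PGame} (h : Follower G (-H)) : Follower (-G) H := by
  simpa only [PGame.neg_neg] using h.neg

theorem IsShort.neg {G : PGame} (hG : IsShort G) : IsShort (-G) := by
  intro K hK
  have hK' := hG (-K) hK.neg_of_neg
  cases K
  exact hK'.symm

theorem Dicot.neg {G : PGame} (hG : Dicot G) : Dicot (-G) := by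
  intro K hK
  have hK' := hG (-K) hK.neg_of_neg
  cases K
  exact hK'.symm

theorem Dicot.of_follower {G H : PGame} (hG : Dicot G) (h : Follower H G) : Dicot H :=
  fun K hK => hG K (hK.trans h)

theorem leftWinsFirst_add_iff {x y : PGame} :
    LeftWinsFirst (x + y) ↔ IsEmpty x.LeftMoves ∧ IsEmpty y.LeftMoves ∨
      (∃ i, ¬ RightWinsFirst (x.moveLeft i + y)) ∨ ∃ i, ¬ RightWinsFirst (x + y.moveLeft i) := by
  rw [LeftWinsFirst]
  exact isEmpty_leftMoves_add.or (exists_leftMoves_add (p := (¬ RightWinsFirst ·)))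

theorem rightWinsFirst_add_iff {x y : PGame} :
    RightWinsFirst (x + y) ↔ IsEmpty x.RightMoves ∧ IsEmpty y.RightMoves ∨
      (∃ j, ¬ LeftWinsFirst (x.moveRight j + y)) ∨ ∃ j, ¬ LeftWinsFirst (x + y.moveRight j) := by
  rw [RightWinsFirst]
  exact isEmpty_rightMoves_add.or (exists_rightMoves_add (p := (¬ LeftWinsFirst ·)))

theorem winsFirst_add_of_isEmpty {z : PGame} [IsEmpty z.LeftMoves] [IsEmpty z.RightMoves]
    (x : PGame) : (LeftWinsFirst (x + z) ↔ LeftWinsFirst x) ∧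
      (RightWinsFirst (x + z) ↔ RightWinsFirst x) := by
  induction x using PGame.moveInduction with
  | h x ihl ihr =>
    rw [leftWinsFirst_add_iff, rightWinsFirst_add_iff, LeftWinsFirst, RightWinsFirst]
    simp [ihl, ihr, ‹IsEmpty z.LeftMoves›, ‹IsEmpty z.RightMoves›]

theorem winsFirst_isEmpty_add {z : PGame} [IsEmpty z.LeftMoves] [IsEmpty z.RightMoves]
    (x : PGame) : (LeftWinsFirst (z + x) ↔ LeftWinsFirst x) ∧
      (RightWinsFirst (z + x) ↔ RightWinsFirst x) := by
  induction x using PGame.moveInduction with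
  | h x ihl ihr =>
    rw [leftWinsFirst_add_iff, rightWinsFirst_add_iff, LeftWinsFirst, RightWinsFirst]
    simp [ihl, ihr, ‹IsEmpty z.LeftMoves›, ‹IsEmpty z.RightMoves›]

theorem exists_moveRight_moveLeft_add_neg_eq (H : PGame) (k : (H + -H).LeftMoves) :
    ∃ H', IsOption H' H ∧ ∃ j, ((H + -H).moveLeft k).moveRight j = H' + -H' := by
  cases H with
  | mk l r L R =>
    rcases k with i | j
    · exact ⟨L i, .moveLeft (x := mk l r L R) i,
        exists_rightMoves_add (x := L i) (p := (· = L i + -L i)) |>.2 (Or.inr ⟨i, rfl⟩)⟩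
    · exact ⟨R j, .moveRight (x := mk l r L R) j,
        exists_rightMoves_add (x := mk l r L R) (p := (· = R j + -R j)) |>.2 (Or.inl ⟨j, rfl⟩)⟩

theorem exists_moveLeft_moveRight_add_neg_eq (H : PGame) (k : (H + -H).RightMoves) :
    ∃ H', IsOption H' H ∧ ∃ i, ((H + -H).moveRight k).moveLeft i = H' + -H' := by
  cases H with
  | mk l r L R =>
    rcases k with j | i
    · exact ⟨R j, .moveRight (x := mk l r L R) j,
        exists_leftMoves_add (x := R j) (p := (· = R j + -R j)) |>.2 (Or.inr ⟨j, rfl⟩)⟩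
    · exact ⟨L i, .moveLeft (x := mk l r L R) i,
        exists_leftMoves_add (x := mk l r L R) (p := (· = L i + -L i)) |>.2 (Or.inl ⟨i, rfl⟩)⟩

theorem rightWinsFirst_moveLeft_add_neg_self_add {H X : PGame}
    (h : ∀ H', IsOption H' H → ¬ LeftWinsFirst (H' + -H' + X)) (k : (H + -H).LeftMoves) :
    RightWinsFirst ((H + -H).moveLeft k + X) := by
  obtain ⟨H', hH', j, hj⟩ := exists_moveRight_moveLeft_add_neg_eq H k
  exact rightWinsFirst_add_iff.2 (Or.inr (Or.inl ⟨j, hj ▸ h H' hH'⟩))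

theorem leftWinsFirst_moveRight_add_neg_self_add {H X : PGame}
    (h : ∀ H', IsOption H' H → ¬ RightWinsFirst (H' + -H' + X)) (k : (H + -H).RightMoves) :
    LeftWinsFirst ((H + -H).moveRight k + X) := by
  obtain ⟨H', hH', i, hi⟩ := exists_moveLeft_moveRight_add_neg_eq H k
  exact leftWinsFirst_add_iff.2 (Or.inr (Or.inl ⟨i, hi ▸ h H' hH'⟩))

theorem leftWinsFirst_add_neg_self_add_iff {H X : PGame} [Nonempty X.LeftMoves]
    (hH : ∀ H', IsOption H' H → ¬ LeftWinsFirst X → ¬ LeftWinsFirst (H' + -H' + X))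
    (hX : ∀ i, RightWinsFirst (H + -H + X.moveLeft i) ↔ RightWinsFirst (X.moveLeft i)) :
    LeftWinsFirst (H + -H + X) ↔ LeftWinsFirst X := by
  have hXl : ¬ IsEmpty X.LeftMoves := not_isEmpty_of_nonempty _
  refine ⟨fun hL => ?_, fun hL => ?_⟩
  · rcases leftWinsFirst_add_iff.1 hL with ⟨-, hXl'⟩ | ⟨k, hk⟩ | ⟨i, hi⟩
    · exact absurd hXl' hXl
    · by_contra hnX
      exact hk (rightWinsFirst_moveLeft_add_neg_self_add (fun H' hH' => hH H' hH' hnX) k)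
    · rw [LeftWinsFirst]
      exact .inr ⟨i, mt (hX i).2 hi⟩
  · rw [LeftWinsFirst] at hL
    rcases hL with hXl' | ⟨i, hi⟩
    · exact absurd hXl' hXl
    · exact leftWinsFirst_add_iff.2 (.inr (.inr ⟨i, mt (hX i).1 hi⟩))

theorem rightWinsFirst_add_neg_self_add_iff {H X : PGame} [Nonempty X.RightMoves]
    (hH : ∀ H', IsOption H' H → ¬ RightWinsFirst X → ¬ RightWinsFirst (H' + -H' + X))
    (hX : ∀ j, LeftWinsFirst (H + -H + X.moveRight j) ↔ LeftWinsFirst (X.moveRight j)) :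
    RightWinsFirst (H + -H + X) ↔ RightWinsFirst X := by
  have hXr : ¬ IsEmpty X.RightMoves := not_isEmpty_of_nonempty _
  refine ⟨fun hR => ?_, fun hR => ?_⟩
  · rcases rightWinsFirst_add_iff.1 hR with ⟨-, hXr'⟩ | ⟨k, hk⟩ | ⟨j, hj⟩
    · exact absurd hXr' hXr
    · by_contra hnX
      exact hk (leftWinsFirst_moveRight_add_neg_self_add (fun H' hH' => hH H' hH' hnX) k)
    · rw [RightWinsFirst]
      exact .inr ⟨j, mt (hX j).2 hj⟩
  · rw [RightWinsFirst] at hR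
    rcases hR with hXr' | ⟨j, hj⟩
    · exact absurd hXr' hXr
    · exact rightWinsFirst_add_iff.2 (.inr (.inr ⟨j, mt (hX j).1 hj⟩))

theorem winsFirst_add_neg_self_add {H : PGame}
    (hH : ∀ H', Follower H' H → LeftWinsFirst (H' + -H') ∧ RightWinsFirst (H' + -H'))
    {X : PGame} (hX : Dicot X) :
    (LeftWinsFirst (H + -H + X) ↔ LeftWinsFirst X) ∧
      (RightWinsFirst (H + -H + X) ↔ RightWinsFirst X) := by
  induction H using PGame.moveInduction generalizing X with
  | h H ihl ihr =>
  have ih : ∀ H', IsOption H' H → ∀ {X}, Dicot X →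
      (LeftWinsFirst (H' + -H' + X) ↔ LeftWinsFirst X) ∧
        (RightWinsFirst (H' + -H' + X) ↔ RightWinsFirst X) := by
    rintro _ (i | j) X hX
    · exact ihl i (fun K hK => hH K (.tail hK (.moveLeft i))) hX
    · exact ihr j (fun K hK => hH K (.tail hK (.moveRight j))) hX
  induction X using PGame.moveInduction with
  | h X ihXl ihXr =>
  by_cases hXl : IsEmpty X.LeftMoves
  · have hXr : IsEmpty X.RightMoves := (hX X .refl).1 hXl
    rw [(winsFirst_add_of_isEmpty _).1, (winsFirst_add_of_isEmpty _).2]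
    exact ⟨iff_of_true (hH H .refl).1 (by rw [LeftWinsFirst]; exact .inl hXl),
      iff_of_true (hH H .refl).2 (by rw [RightWinsFirst]; exact .inl hXr)⟩
  have : Nonempty X.LeftMoves := not_isEmpty_iff.1 hXl
  have : Nonempty X.RightMoves := not_isEmpty_iff.1 (mt (hX X .refl).2 hXl)
  have ihXl i := ihXl i (hX.of_follower (.single (.moveLeft i)))
  have ihXr j := ihXr j (hX.of_follower (.single (.moveRight j)))
  exact ⟨leftWinsFirst_add_neg_self_add_iff (fun H' hH' => mt (ih H' hH' hX).1.1)
      fun i => (ihXl i).2,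
    rightWinsFirst_add_neg_self_add_iff (fun H' hH' => mt (ih H' hH' hX).2.1)
      fun j => (ihXr j).1⟩

/-- if every follower `G'` of a short dicot `G` satisfies
`o(G' + (−G')) = N`, then `G + (−G) = 0` (mod `D⁻`); in particular `G` is invertible. -/
theorem stmt2 (G : PGame) (hs : IsShort G) (hd : Dicot G)
    (h : ∀ G', Follower G' G → outcome (G' + (-G')) = MOutcome.N) :
    Deq (G + (-G)) 0 ∧ DInvertible G := by
  have hN G' (hG' : Follower G' G) : LeftWinsFirst (G' + -G') ∧ RightWinsFirst (G' + -G') :=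
    outcome_eq_N_iff.1 (h G' hG')
  have hzero : Deq (G + -G) 0 := by
    intro X _ hX
    have hGX := winsFirst_add_neg_self_add hN hX
    have h0X := winsFirst_isEmpty_add (z := 0) X
    exact outcome_eq_of_winsFirst_iff (hGX.1.trans h0X.1.symm) (hGX.2.trans h0X.2.symm)
  exact ⟨hzero, -G, hs.neg, hd.neg, hzero⟩

end MisereDicot
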